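/- arXiv:2105.00549 — 10 statements merged into one kernel-verified Lean document; each statement's English description precedes it below -/
import Mathlib

section
/- Let (X,d) be a complete metric space and T : X → X a mapping such that d(Tx, Ty) ≤ β(d(x,y))·d(x,y) for all x,y ∈ X, where β : [0,∞) → [0,1) satisfies: whenever lim β(tₙ) = 1, then lim tₙ = 0. Then T has a unique fixed point u ∈ X, and for every x ∈ X the Picard iterates Tⁿx converge to u. -/
/-!
On pairs of points at distance at least `ε > 0` a Geraghty contraction contracts by a uniform
factor `q < 1`: otherwise there would be `tₙ ≥ ε` with `β tₙ → 1`, which the Geraghty condition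
forces to tend to `0`. Maps with this property (Rakotch contractions) behave like Banach
contractions: the steps of a Picard orbit shrink to `0`, and once a step is below `(1 - q) ε`,
the orbit can no longer leave the `2ε`-ball around that point, so it is Cauchy. Its limit is
fixed by continuity, and two distinct fixed points would be moved strictly closer.
-/

open Filter Topology

def IsGeraghty (β : ℝ → ℝ) : Prop :=
  (∀ t : ℝ, 0 ≤ t → 0 ≤ β t ∧ β t < 1) ∧
  (∀ t : ℕ → ℝ, (∀ n, 0 ≤ t n) →
    Filter.Tendsto (fun n => β (t n)) Filter.atTop (nhds 1) →
    Filter.Tendsto t Filter.atTop (nhds 0))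

open Function

/-- Rakotch's condition `d(Tx, Ty) ≤ α(d(x, y)) d(x, y)` with `α` decreasing and `α < 1`,
recorded through the bounds `q` of `α` on the rays `[ε, ∞)`. -/
def IsRakotchContraction {X : Type*} [PseudoMetricSpace X] (T : X → X) : Prop :=
  ∀ ε > 0, ∃ q ∈ Set.Ico (0 : ℝ) 1, ∀ x y, ε ≤ dist x y → dist (T x) (T y) ≤ q * dist x y

namespace IsGeraghty

variable {β : ℝ → ℝ}

theorem exists_le_lt_one (hβ : IsGeraghty β) {ε : ℝ} (hε : 0 < ε) :
    ∃ q ∈ Set.Ico (0 : ℝ) 1, ∀ t, ε ≤ t → β t ≤ q := by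
  by_contra! hnear
  have hsel : ∀ n : ℕ, ∃ t, ε ≤ t ∧ 1 - 1 / ((n : ℝ) + 1) < β t := fun n =>
    hnear _ ⟨by rw [sub_nonneg, div_le_one (by positivity)]; linarith [n.cast_nonneg (α := ℝ)],
      sub_lt_self _ (by positivity)⟩
  choose t hεt hβt using hsel
  have ht₀ : ∀ n, 0 ≤ t n := fun n => hε.le.trans (hεt n)
  have hlim : Tendsto (fun n => β (t n)) atTop (𝓝 1) := by
    have hlow : Tendsto (fun n : ℕ => 1 - 1 / ((n : ℝ) + 1)) atTop (𝓝 1) := by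
      simpa using tendsto_one_div_add_atTop_nhds_zero_nat.const_sub (1 : ℝ)
    exact tendsto_of_tendsto_of_tendsto_of_le_of_le hlow tendsto_const_nhds
      (fun n => (hβt n).le) (fun n => (hβ.1 _ (ht₀ n)).2.le)
  exact hε.not_ge (ge_of_tendsto' (hβ.2 t ht₀ hlim) hεt)

theorem isRakotchContraction {X : Type*} [PseudoMetricSpace X] (hβ : IsGeraghty β) {T : X → X}
    (hT : ∀ x y : X, dist (T x) (T y) ≤ β (dist x y) * dist x y) :
    IsRakotchContraction T := by
  intro ε hε
  obtain ⟨q, hq, hβq⟩ := hβ.exists_le_lt_one hε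
  exact ⟨q, hq, fun x y hxy =>
    (hT x y).trans (mul_le_mul_of_nonneg_right (hβq _ hxy) dist_nonneg)⟩

end IsGeraghty

namespace IsRakotchContraction

variable {X : Type*} [MetricSpace X] {T : X → X}

theorem dist_le (hT : IsRakotchContraction T) (x y : X) : dist (T x) (T y) ≤ dist x y := by
  rcases eq_or_ne x y with rfl | hxy
  · simp
  · obtain ⟨q, ⟨-, hq₁⟩, hq⟩ := hT _ (dist_pos.mpr hxy)
    exact (hq x y le_rfl).trans (mul_le_of_le_one_left dist_nonneg hq₁.le)

theorem continuous (hT : IsRakotchContraction T) : Continuous T :=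
  (LipschitzWith.mk_one hT.dist_le).continuous

theorem exists_dist_iterate_succ_lt (hT : IsRakotchContraction T) (x : X) {δ : ℝ}
    (hδ : 0 < δ) : ∃ N, dist (T^[N] x) (T^[N + 1] x) < δ := by
  by_contra! hfar
  obtain ⟨q, ⟨hq₀, hq₁⟩, hq⟩ := hT δ hδ
  set d : ℕ → ℝ := fun n => dist (T^[n] x) (T^[n + 1] x)
  have hgeom : ∀ n, d n ≤ q ^ n * d 0 := fun n => le_geom hq₀ n fun k _ => by
    have hstep := hq _ _ (hfar k)
    rwa [← iterate_succ_apply' T k x, ← iterate_succ_apply' T (k + 1) x] at hstep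
  have hlim : Tendsto (fun n => q ^ n * d 0) atTop (𝓝 0) := by
    simpa using (tendsto_pow_atTop_nhds_zero_of_lt_one hq₀ hq₁).mul_const (d 0)
  exact hδ.not_ge (ge_of_tendsto' hlim fun n => (hfar n).trans (hgeom n))

theorem cauchySeq_iterate (hT : IsRakotchContraction T) (x : X) :
    CauchySeq fun n => T^[n] x := by
  rw [Metric.cauchySeq_iff']
  intro ε hε
  obtain ⟨q, ⟨hq₀, hq₁⟩, hq⟩ := hT (ε / 3) (by positivity)
  have hmap : ∀ y z, dist y z ≤ 2 * (ε / 3) → dist (T y) (T z) ≤ (1 + q) * (ε / 3) := by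
    intro y z hyz
    rcases le_or_gt (ε / 3) (dist y z) with hfar | hnear
    · nlinarith [hq y z hfar]
    · nlinarith [hT.dist_le y z]
  obtain ⟨N, hN⟩ := hT.exists_dist_iterate_succ_lt x
    (δ := (1 - q) * (ε / 3)) (mul_pos (sub_pos.mpr hq₁) (by positivity))
  have hball : ∀ m ≥ N, dist (T^[m] x) (T^[N] x) ≤ 2 * (ε / 3) := by
    intro m hm
    induction m, hm using Nat.le_induction with
    | base => simp only [dist_self]; positivity
    | succ m _ ih =>
      calc dist (T^[m + 1] x) (T^[N] x)
          ≤ dist (T (T^[m] x)) (T (T^[N] x)) + dist (T^[N + 1] x) (T^[N] x) := by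
            rw [iterate_succ_apply', ← iterate_succ_apply' T N x]
            exact dist_triangle _ _ _
        _ ≤ (1 + q) * (ε / 3) + (1 - q) * (ε / 3) := by
            rw [dist_comm (T^[N + 1] x)]
            exact add_le_add (hmap _ _ ih) hN.le
        _ = 2 * (ε / 3) := by ring
  exact ⟨N, fun m hm => (hball m hm).trans_lt (by linarith)⟩

theorem exists_isFixedPt_tendsto_iterate [CompleteSpace X] (hT : IsRakotchContraction T)
    (x : X) : ∃ u, IsFixedPt T u ∧ Tendsto (fun n => T^[n] x) atTop (𝓝 u) :=
  let ⟨u, hu⟩ := cauchySeq_tendsto_of_complete (hT.cauchySeq_iterate x)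
  ⟨u, isFixedPt_of_tendsto_iterate hu hT.continuous.continuousAt, hu⟩

theorem eq_of_isFixedPt (hT : IsRakotchContraction T)
    {u v : X} (hu : IsFixedPt T u) (hv : IsFixedPt T v) : u = v := by
  by_contra hne
  obtain ⟨q, ⟨-, hq₁⟩, hq⟩ := hT (dist u v) (dist_pos.mpr hne)
  have hmoved := hq u v le_rfl
  rw [hu.eq, hv.eq] at hmoved
  exact (mul_lt_of_lt_one_left (dist_pos.mpr hne) hq₁).not_ge hmoved

end IsRakotchContraction

theorem geraghty_fixed_point {X : Type*} [MetricSpace X] [CompleteSpace X] [Nonempty X]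
    (β : ℝ → ℝ) (hβ : IsGeraghty β) (T : X → X)
    (hT : ∀ x y : X, dist (T x) (T y) ≤ β (dist x y) * dist x y) :
    ∃ u : X, T u = u ∧ (∀ v : X, T v = v → v = u) ∧
      ∀ x : X, Tendsto (fun n => T^[n] x) atTop (𝓝 u) := by
  have hR := hβ.isRakotchContraction hT
  obtain ⟨u, hu, -⟩ := hR.exists_isFixedPt_tendsto_iterate (Classical.arbitrary X)
  refine ⟨u, hu, fun v hv => hR.eq_of_isFixedPt hv hu, fun x => ?_⟩
  obtain ⟨w, hw, hxw⟩ := hR.exists_isFixedPt_tendsto_iterate x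
  rwa [hR.eq_of_isFixedPt hw hu] at hxw
end

section
/- Let (X,d) be a complete metric space and T : X → X a mapping satisfying d(Tx, Ty) ≤ c·(d(Tx,x) + d(Ty,y)) for all x,y ∈ X, where c ∈ (0, 1/2). Then T has a unique fixed point in X. -/
open Filter Topology

theorem kannan_fixed_point {X : Type*} [MetricSpace X] [CompleteSpace X] [Nonempty X]
    (T : X → X) (c : ℝ) (hc0 : 0 < c) (hc1 : c < 1 / 2)
    (hT : ∀ x y : X, dist (T x) (T y) ≤ c * (dist (T x) x + dist (T y) y)) :
    ∃! u : X, T u = u := by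
  obtain ⟨x0⟩ := ‹Nonempty X›
  set u : ℕ → X := fun n => T^[n] x0 with hu
  have hstep : ∀ n, u (n + 1) = T (u n) := by
    intro n; simp [hu, Function.iterate_succ_apply']
  set r : ℝ := c / (1 - c) with hr
  have h1c : 0 < 1 - c := by linarith
  have hr0 : 0 ≤ r := le_of_lt (div_pos hc0 h1c)
  have hr1 : r < 1 := by
    rw [hr, div_lt_one h1c]; linarith
  -- key one-step estimate
  have hkey : ∀ n, dist (u (n + 2)) (u (n + 1)) ≤ r * dist (u (n + 1)) (u n) := by
    intro n
    have h := hT (u (n + 1)) (u n)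
    rw [← hstep, ← hstep] at h
    rw [hr, div_mul_eq_mul_div, le_div_iff₀ h1c]
    nlinarith [dist_nonneg (α := X) (x := u (n+2)) (y := u (n+1))]
  have hgeo : ∀ n, dist (u (n + 1)) (u n) ≤ dist (u 1) (u 0) * r ^ n := by
    intro n
    induction n with
    | zero => simp
    | succ k ih =>
      calc dist (u (k + 2)) (u (k + 1)) ≤ r * dist (u (k + 1)) (u k) := hkey k
        _ ≤ r * (dist (u 1) (u 0) * r ^ k) := by
            exact mul_le_mul_of_nonneg_left ih hr0
        _ = dist (u 1) (u 0) * r ^ (k + 1) := by ring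
  have hcauchy : CauchySeq u := by
    apply cauchySeq_of_le_geometric r (dist (u 1) (u 0)) hr1
    intro n
    rw [dist_comm]
    exact hgeo n
  obtain ⟨p, hp⟩ := cauchySeq_tendsto_of_complete hcauchy
  -- distances to limit
  have hd0 : Tendsto (fun n => dist (u (n + 1)) (u n)) atTop (𝓝 0) := by
    refine squeeze_zero (fun n => dist_nonneg) hgeo ?_
    have h := (tendsto_pow_atTop_nhds_zero_of_lt_one hr0 hr1).const_mul (dist (u 1) (u 0))
    simpa using h
  have hd1 : Tendsto (fun n => dist (u (n + 1)) p) atTop (𝓝 0) := by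
    have := (tendsto_iff_dist_tendsto_zero.mp hp).comp (tendsto_add_atTop_nat 1)
    exact this
  -- fixed point
  have hfix : T p = p := by
    have hb : ∀ n, dist (T p) p ≤
        c * (dist (T p) p + dist (u (n + 1)) (u n)) + dist (u (n + 1)) p := by
      intro n
      calc dist (T p) p ≤ dist (T p) (T (u n)) + dist (T (u n)) p := dist_triangle _ _ _
        _ ≤ c * (dist (T p) p + dist (T (u n)) (u n)) + dist (T (u n)) p := by
            have := hT p (u n); linarith
        _ = c * (dist (T p) p + dist (u (n + 1)) (u n)) + dist (u (n + 1)) p := by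
            rw [hstep]
    have hlim : Tendsto (fun n => c * (dist (T p) p + dist (u (n + 1)) (u n))
        + dist (u (n + 1)) p) atTop (𝓝 (c * (dist (T p) p + 0) + 0)) :=
      ((tendsto_const_nhds.add hd0).const_mul c).add hd1
    have hle : dist (T p) p ≤ c * (dist (T p) p + 0) + 0 := ge_of_tendsto' hlim hb
    have : dist (T p) p ≤ 0 := by nlinarith
    have := le_antisymm this dist_nonneg
    exact dist_eq_zero.mp this
  refine ⟨p, hfix, ?_⟩
  intro q hq
  have h := hT q p
  rw [hq, hfix] at h
  simp only [dist_self, add_zero, mul_zero] at h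
  exact dist_le_zero.mp h
end

section
/- Let (X,d) be a complete metric space and T : X → X a mapping satisfying d(Tx, Ty) ≤ c·(d(Tx,y) + d(Ty,x)) for all x,y ∈ X, where c ∈ (0, 1/2). Then T has a unique fixed point in X. -/
open Filter Topology

theorem fisher_fixed_point {X : Type*} [MetricSpace X] [CompleteSpace X] [Nonempty X]
    (T : X → X) (c : ℝ) (hc0 : 0 < c) (hc1 : c < 1 / 2)
    (hT : ∀ x y : X, dist (T x) (T y) ≤ c * (dist (T x) y + dist (T y) x)) :
    ∃! u : X, T u = u := by
  obtain ⟨x₀⟩ := ‹Nonempty X›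
  set r := c / (1 - c) with hr
  have h1c : 0 < 1 - c := by linarith
  have hr1 : r < 1 := by rw [hr, div_lt_one h1c]; linarith
  have hr0 : 0 ≤ r := by positivity
  have key : ∀ a : X, dist (T (T a)) (T a) ≤ r * dist (T a) a := by
    intro a
    have h := hT (T a) a
    have h2 : dist (T (T a)) a ≤ dist (T (T a)) (T a) + dist (T a) a := dist_triangle _ _ _
    have h3 : dist (T (T a)) (T a) ≤ c * (dist (T (T a)) (T a) + dist (T a) a) := by
      calc dist (T (T a)) (T a) ≤ c * (dist (T (T a)) a + dist (T a) (T a)) := h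
        _ = c * dist (T (T a)) a := by rw [dist_self]; ring
        _ ≤ c * (dist (T (T a)) (T a) + dist (T a) a) := by nlinarith
    rw [hr, div_mul_eq_mul_div, le_div_iff₀ h1c]
    nlinarith
  set u : ℕ → X := fun n => T^[n] x₀ with hu
  have hstep : ∀ n, u (n + 1) = T (u n) := fun n => Function.iterate_succ_apply' T n x₀
  have hbound : ∀ n, dist (u n) (u (n + 1)) ≤ dist x₀ (T x₀) * r ^ n := by
    intro n
    induction n with
    | zero => simp [hu]
    | succ n ih =>
      have hk := key (u n)
      rw [← hstep n, ← hstep (n + 1)] at hk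
      have hkk : dist (u (n + 1)) (u (n + 2)) ≤ r * dist (u n) (u (n + 1)) := by
        rw [dist_comm (u (n+1)) (u (n+2)), dist_comm (u n) (u (n+1))]
        simpa using hk
      calc dist (u (n + 1)) (u (n + 2)) ≤ r * dist (u n) (u (n + 1)) := hkk
        _ ≤ r * (dist x₀ (T x₀) * r ^ n) := by nlinarith [dist_nonneg (x := u n) (y := u (n+1))]
        _ = dist x₀ (T x₀) * r ^ (n + 1) := by ring
  have hcauchy : CauchySeq u := cauchySeq_of_le_geometric r (dist x₀ (T x₀)) hr1 hbound
  obtain ⟨p, hp⟩ := cauchySeq_tendsto_of_complete hcauchy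
  have hp1 : Tendsto (fun n => u (n + 1)) atTop (𝓝 p) := hp.comp (tendsto_add_atTop_nat 1)
  have hlim1 : Tendsto (fun n => dist (T p) (u (n + 1))) atTop (𝓝 (dist (T p) p)) :=
    tendsto_const_nhds.dist hp1
  have hlim2 : Tendsto (fun n => c * (dist (T p) (u n) + dist (u (n + 1)) p)) atTop
      (𝓝 (c * (dist (T p) p + dist p p))) :=
    tendsto_const_nhds.mul ((tendsto_const_nhds.dist hp).add (hp1.dist tendsto_const_nhds))
  have hle : dist (T p) p ≤ c * (dist (T p) p + dist p p) :=
    le_of_tendsto_of_tendsto' hlim1 hlim2 (fun n => by rw [hstep n]; exact hT p (u n))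
  rw [dist_self] at hle
  have hfix : T p = p := by
    rw [← dist_eq_zero]
    nlinarith [dist_nonneg (x := T p) (y := p)]
  refine ⟨p, hfix, ?_⟩
  intro v hv
  have h := hT v p
  rw [hv, hfix] at h
  rw [← dist_eq_zero]
  nlinarith [dist_nonneg (x := v) (y := p), dist_comm v p, dist_comm p v]
end

section
/- Let (X,d) be a complete metric space and T : X → X satisfy d(Tx, Ty) ≤ (β(d(x,y))/2)·(d(Tx,x) + d(Ty,y)) for all x,y ∈ X, where β is a Geraghty function. Then T has a unique fixed point u ∈ X, and for every x₀ ∈ X the sequence Tⁿx₀ converges to u. -/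
open Filter Topology

theorem kannan_geraghty_fixed_point {X : Type*} [MetricSpace X] [CompleteSpace X] [Nonempty X]
    (β : ℝ → ℝ) (hβ : IsGeraghty β) (T : X → X)
    (hT : ∀ x y : X, dist (T x) (T y) ≤ β (dist x y) / 2 * (dist (T x) x + dist (T y) y)) :
    ∃ u : X, T u = u ∧ (∀ v : X, T v = v → v = u) ∧
      ∀ x₀ : X, Tendsto (fun n => T^[n] x₀) atTop (𝓝 u) := by
  obtain ⟨hβ1, hβ2⟩ := hβ
  have key : ∀ x₀ : X, ∃ u : X, T u = u ∧ Tendsto (fun n => T^[n] x₀) atTop (𝓝 u) := by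
    intro x₀
    set a : ℕ → ℝ := fun n => dist (T^[n+1] x₀) (T^[n] x₀) with ha
    have ha0 : ∀ n, 0 ≤ a n := fun n => dist_nonneg
    have hstep : ∀ n, a (n+1) ≤ β (a n) / 2 * (a (n+1) + a n) := by
      intro n
      have h := hT (T^[n+1] x₀) (T^[n] x₀)
      simpa [ha, Function.iterate_succ_apply'] using h
    have hanti : ∀ n, a (n+1) ≤ a n := by
      intro n
      have h := hstep n
      have hb := hβ1 (a n) (ha0 n)
      nlinarith [ha0 (n+1), ha0 n]
    have hAnti : Antitone a := antitone_nat_of_succ_le hanti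
    have hbdd : BddBelow (Set.range a) := ⟨0, by rintro x ⟨n, rfl⟩; exact ha0 n⟩
    have hlim : Tendsto a atTop (𝓝 (⨅ n, a n)) := tendsto_atTop_ciInf hAnti hbdd
    set r := ⨅ n, a n with hrdef
    have hr0 : 0 ≤ r := le_ciInf ha0
    have hrle : ∀ n, r ≤ a n := fun n => ciInf_le hbdd n
    have hr : r = 0 := by
      by_contra hne
      have hrpos : 0 < r := lt_of_le_of_ne hr0 (Ne.symm hne)
      have hlim1 : Tendsto (fun n => a (n+1)) atTop (𝓝 r) :=
        hlim.comp (tendsto_add_atTop_nat 1)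
      have hlow : Tendsto (fun n => 2 * a (n+1) / (a (n+1) + a n)) atTop (𝓝 1) := by
        have h1 : Tendsto (fun n => 2 * a (n+1) / (a (n+1) + a n)) atTop
            (𝓝 (2 * r / (r + r))) :=
          (tendsto_const_nhds.mul hlim1).div (hlim1.add hlim) (by positivity)
        have : 2 * r / (r + r) = 1 := by field_simp; ring
        rwa [this] at h1
      have hβlim : Tendsto (fun n => β (a n)) atTop (𝓝 1) := by
        apply tendsto_of_tendsto_of_tendsto_of_le_of_le hlow tendsto_const_nhds
        · intro n
          have hs : 0 < a (n+1) + a n := by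
            have := hrle n; have := hrle (n+1); linarith
          rw [div_le_iff₀ hs]
          have h := hstep n
          nlinarith
        · intro n; exact (hβ1 (a n) (ha0 n)).2.le
      have hz := hβ2 a ha0 hβlim
      have : r = 0 := tendsto_nhds_unique hlim hz
      exact hne this
    have haz : Tendsto a atTop (𝓝 0) := hr ▸ hlim
    set t : ℕ → X := fun n => T^[n+1] x₀ with htdef
    have hcau : CauchySeq t := by
      apply cauchySeq_of_le_tendsto_0 a _ haz
      intro n m N hn hm
      have h := hT (T^[n] x₀) (T^[m] x₀)
      have hb := hβ1 (dist (T^[n] x₀) (T^[m] x₀)) dist_nonneg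
      have h1 : a n ≤ a N := hAnti hn
      have h2 : a m ≤ a N := hAnti hm
      have hd : dist (t n) (t m) ≤ (a n + a m) / 2 := by
        simp only [htdef, ha, Function.iterate_succ_apply']
        have hS : (0:ℝ) ≤ dist (T (T^[n] x₀)) (T^[n] x₀) + dist (T (T^[m] x₀)) (T^[m] x₀) := by
          positivity
        nlinarith [mul_nonneg (sub_nonneg.mpr hb.2.le) hS]
      simp only [ha] at h1 h2 hd ⊢
      linarith
    obtain ⟨u, hu⟩ := cauchySeq_tendsto_of_complete hcau
    have horbit : Tendsto (fun n => T^[n] x₀) atTop (𝓝 u) :=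
      (tendsto_add_atTop_iff_nat 1).mp hu
    refine ⟨u, ?_, horbit⟩
    have hdist : Tendsto (fun n => dist (T u) (t n)) atTop (𝓝 (dist (T u) u)) :=
      tendsto_const_nhds.dist hu
    have hg : Tendsto (fun n => (dist (T u) u + a n) / 2) atTop
        (𝓝 ((dist (T u) u + 0) / 2)) :=
      (tendsto_const_nhds.add haz).div_const 2
    have hle : dist (T u) u ≤ (dist (T u) u + 0) / 2 := by
      refine le_of_tendsto_of_tendsto' hdist hg ?_
      intro n
      have h := hT u (T^[n] x₀)
      have hb := hβ1 (dist u (T^[n] x₀)) dist_nonneg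
      simp only [htdef, ha, Function.iterate_succ_apply'] at *
      nlinarith [dist_nonneg (x := T u) (y := u), ha0 n]
    have h0 : dist (T u) u = 0 := by
      have := dist_nonneg (x := T u) (y := u); linarith
    exact dist_eq_zero.mp h0
  obtain ⟨x⟩ := ‹Nonempty X›
  obtain ⟨u, hu, _⟩ := key x
  have huniq : ∀ v, T v = v → v = u := by
    intro v hv
    have h := hT v u
    rw [hv, hu] at h
    simp [dist_self] at h
    exact dist_le_zero.mp (by simpa using h)
  refine ⟨u, hu, huniq, ?_⟩
  intro x₀
  obtain ⟨w, hw, hcw⟩ := key x₀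
  rwa [huniq w hw] at hcw
end

section
/- Let (X,d) be a complete metric space, k ∈ ℕ, and T : X^k → X satisfy, for all u₁,…,u_{k+1} ∈ X: d(T(u₁,…,u_k), T(u₂,…,u_{k+1})) ≤ β(M(u,v))·M(u,v), where M(u,v) = max{ d(u_k, u_{k+1}), d(u_k, T(u₁,…,u_k)), d(u_{k+1}, T(u₂,…,u_{k+1})) } and β is a Geraghty function. Then there exists u ∈ X with T(u,u,…,u) = u. -/
/-!
Iterate `T` on windows: `y (n + k) = T (y n, …, y (n + k - 1))`. For a sequence `w`, let `e t` be
the distance from the last entry of the window at position `t` to its image under `T`, and `δ t`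
the distance from that entry to the next one. In the quadrilateral formed by these two entries and
the images of the windows at `t` and `t + 1`, each of `δ t`, `e t`, `e (t + 1)` is at most the sum
of the other two plus `β M * M`, `M` being their maximum. Along a sequence of such configurations
the Geraghty property therefore forces the third quantity to `0` as soon as two of them tend to `0`.

On the orbit this makes consecutive distances tend to `0`. If the orbit were not Cauchy, take
`dist (y m) (y n) ≥ ε` with `m, n → ∞`, splice the window ending at `y m` with the orbit from
`y n`, and propagate `e → 0` backwards from the tail: this gives `dist (y m) (y n) → 0`. At the
limit `u`, splicing the orbit with the constant sequence `u` and propagating `e → 0` forwards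
reaches the window `(u, …, u)`, whence `dist u (T (u, …, u)) = 0`.
-/
open Filter Topology

namespace IsGeraghty

variable {β : ℝ → ℝ}

theorem apply_mul_le (hβ : IsGeraghty β) {x : ℝ} (hx : 0 ≤ x) : β x * x ≤ x :=
  mul_le_of_le_one_left hx (hβ.1 x hx).2.le

theorem tendsto_zero_of_tendsto_one_sub_mul (hβ : IsGeraghty β) {t : ℕ → ℝ} (ht : ∀ n, 0 ≤ t n)
    (h : Tendsto (fun n => (1 - β (t n)) * t n) atTop (𝓝 0)) : Tendsto t atTop (𝓝 0) := by
  by_contra hne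
  obtain ⟨η, hη, hfreq⟩ : ∃ η > 0, ∃ᶠ n in atTop, η ≤ t n := by
    by_contra! hsmall
    exact hne (tendsto_order.2 ⟨fun a ha => .of_forall fun n => ha.trans_le (ht n), hsmall⟩)
  obtain ⟨φ, hφ, hηφ⟩ := extraction_of_frequently_atTop hfreq
  have hβφ : Tendsto (fun n => β (t (φ n))) atTop (𝓝 1) := by
    have hlow : Tendsto (fun n => 1 - (1 - β (t (φ n))) * t (φ n) / η) atTop (𝓝 1) := by
      simpa using tendsto_const_nhds.sub ((h.comp hφ.tendsto_atTop).div_const η)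
    refine tendsto_of_tendsto_of_tendsto_of_le_of_le hlow tendsto_const_nhds (fun n => ?_)
      fun n => (hβ.1 _ (ht _)).2.le
    have : 1 - β (t (φ n)) ≤ (1 - β (t (φ n))) * t (φ n) / η :=
      (le_div_iff₀ hη).2 (mul_le_mul_of_nonneg_left (hηφ n) (by linarith [(hβ.1 _ (ht (φ n))).2]))
    linarith
  exact hη.not_ge (ge_of_tendsto (hβ.2 _ (fun n => ht _) hβφ) (.of_forall hηφ))

theorem tendsto_zero_of_le_add (hβ : IsGeraghty β) {a b c : ℕ → ℝ} (ha : ∀ n, 0 ≤ a n)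
    (hb₀ : ∀ n, 0 ≤ b n) (hc₀ : ∀ n, 0 ≤ c n)
    (hb : Tendsto b atTop (𝓝 0)) (hc : Tendsto c atTop (𝓝 0))
    (h : ∀ n, a n ≤ b n + c n +
      β (max (a n) (max (b n) (c n))) * max (a n) (max (b n) (c n))) :
    Tendsto a atTop (𝓝 0) := by
  set m := fun n => max (a n) (max (b n) (c n))
  have hm₀ : ∀ n, 0 ≤ m n := fun n => (ha n).trans (le_max_left _ _)
  have hgap : ∀ n, (1 - β (m n)) * m n ≤ b n + c n := fun n => by
    have : 0 ≤ β (m n) * m n := mul_nonneg (hβ.1 _ (hm₀ n)).1 (hm₀ n)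
    have : m n ≤ b n + c n + β (m n) * m n :=
      max_le (h n) (max_le (by linarith [hc₀ n]) (by linarith [hb₀ n]))
    linarith
  have hm_lim : Tendsto m atTop (𝓝 0) := by
    refine hβ.tendsto_zero_of_tendsto_one_sub_mul hm₀ (squeeze_zero (fun n => ?_) hgap ?_)
    · exact mul_nonneg (by linarith [(hβ.1 _ (hm₀ n)).2]) (hm₀ n)
    · simpa using hb.add hc
  exact squeeze_zero ha (fun n => le_max_left _ _) hm_lim

theorem tendsto_zero_of_succ_le (hβ : IsGeraghty β) {q : ℕ → ℝ} (hq : ∀ n, 0 ≤ q n)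
    (h : ∀ n, q (n + 1) ≤ β (q n) * q n) : Tendsto q atTop (𝓝 0) := by
  have hanti : Antitone q :=
    antitone_nat_of_succ_le fun n => (h n).trans (hβ.apply_mul_le (hq n))
  have hlim := tendsto_atTop_ciInf hanti ⟨0, by rintro _ ⟨n, rfl⟩; exact hq n⟩
  refine hβ.tendsto_zero_of_tendsto_one_sub_mul hq
    (squeeze_zero (g := fun n => q n - q (n + 1)) (fun n => ?_) (fun n => ?_) ?_)
  · exact mul_nonneg (by linarith [(hβ.1 _ (hq n)).2]) (hq n)
  · linarith [h n]
  · simpa using hlim.sub (hlim.comp (tendsto_add_atTop_nat 1))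

theorem le_apply_mul_of_le_max (hβ : IsGeraghty β) {a b : ℝ} (ha : 0 ≤ a) (hb : 0 ≤ b)
    (h : b ≤ β (max a b) * max a b) : b ≤ β a * a := by
  rcases le_total b a with hba | hab
  · rwa [max_eq_left hba] at h
  · rw [max_eq_right hab] at h
    have hb0 : b = 0 := by nlinarith [(hβ.1 b hb).2]
    rw [hb0]
    exact mul_nonneg (hβ.1 a ha).1 ha

end IsGeraghty

section

variable {X : Type*} {k : ℕ}

def window (T : (Fin k → X) → X) (w : ℕ → X) (t : ℕ) : X :=
  T fun i => w (t + i)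

theorem window_shift (T : (Fin k → X) → X) (w : ℕ → X) (s t : ℕ) :
    window T (fun j => w (s + j)) t = window T w (s + t) := by
  simp only [window, add_assoc]

def splice (a b : ℕ → X) (m j : ℕ) : X :=
  if j < m then a j else b (j - m)

theorem splice_of_lt {a b : ℕ → X} {m j : ℕ} (h : j < m) : splice a b m j = a j := if_pos h

theorem splice_of_le {a b : ℕ → X} {m j : ℕ} (h : m ≤ j) : splice a b m j = b (j - m) :=
  if_neg (Nat.not_lt.2 h)

theorem window_splice_zero (T : (Fin k → X) → X) (a b : ℕ → X) :
    window T (splice a b k) 0 = window T a 0 :=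
  congrArg T <| funext fun i => splice_of_lt (by omega)

theorem window_splice_of_le (T : (Fin k → X) → X) (a b : ℕ → X) {t : ℕ} (h : k ≤ t) :
    window T (splice a b k) t = window T b (t - k) :=
  congrArg T <| funext fun i => by rw [splice_of_le (by omega)]; congr 1; omega

noncomputable def orbit (T : (Fin k → X) → X) (x : X) (n : ℕ) : X :=
  if n < k then x else T fun i => orbit T x (n - k + i)
termination_by n
decreasing_by omega

theorem orbit_add (T : (Fin k → X) → X) (x : X) (n : ℕ) :
    orbit T x (n + k) = window T (orbit T x) n := by
  rw [orbit, if_neg (by omega), Nat.add_sub_cancel]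
  rfl

variable [MetricSpace X]

def windowGap (T : (Fin k → X) → X) (w : ℕ → X) (t : ℕ) : ℝ :=
  dist (w (t + (k - 1))) (window T w t)

theorem windowGap_succ (hk : 0 < k) (T : (Fin k → X) → X) (w : ℕ → X) (t : ℕ) :
    windowGap T w (t + 1) = dist (w (t + k)) (window T w (t + 1)) := by
  rw [windowGap, show t + 1 + (k - 1) = t + k by omega]

def IsGeraghtyContraction (β : ℝ → ℝ) (T : (Fin k → X) → X) : Prop :=
  ∀ (w : ℕ → X) (t : ℕ), dist (window T w t) (window T w (t + 1)) ≤
    β (max (dist (w (t + (k - 1))) (w (t + k))) (max (windowGap T w t) (windowGap T w (t + 1)))) *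
      max (dist (w (t + (k - 1))) (w (t + k))) (max (windowGap T w t) (windowGap T w (t + 1)))

variable {β : ℝ → ℝ} {T : (Fin k → X) → X} {w : ℕ → ℕ → X} {t : ℕ}

theorem tendsto_windowGap_succ_iff (hk : 0 < k) (hβ : IsGeraghty β)
    (hT : IsGeraghtyContraction β T)
    (hδ : Tendsto (fun n => dist (w n (t + (k - 1))) (w n (t + k))) atTop (𝓝 0)) :
    Tendsto (fun n => windowGap T (w n) t) atTop (𝓝 0) ↔
      Tendsto (fun n => windowGap T (w n) (t + 1)) atTop (𝓝 0) := by
  have hZ := fun n => hT (w n) t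
  simp only [windowGap_succ hk] at hZ ⊢
  simp only [windowGap] at hZ ⊢
  constructor
  · intro he
    refine hβ.tendsto_zero_of_le_add (fun n => dist_nonneg) (fun n => dist_nonneg)
      (fun n => dist_nonneg) hδ he fun n => ?_
    rw [show ∀ a b c : ℝ, max c (max a b) = max a (max b c) by intros; ac_rfl]
    linarith [hZ n, dist_triangle4 (w n (t + k)) (w n (t + (k - 1))) (window T (w n) t)
      (window T (w n) (t + 1)), dist_comm (w n (t + k)) (w n (t + (k - 1)))]
  · intro he
    refine hβ.tendsto_zero_of_le_add (fun n => dist_nonneg) (fun n => dist_nonneg)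
      (fun n => dist_nonneg) hδ he fun n => ?_
    rw [max_left_comm]
    linarith [hZ n, dist_triangle4 (w n (t + (k - 1))) (w n (t + k)) (window T (w n) (t + 1))
      (window T (w n) t), dist_comm (window T (w n) t) (window T (w n) (t + 1))]

theorem tendsto_dist_of_tendsto_windowGap (hk : 0 < k) (hβ : IsGeraghty β)
    (hT : IsGeraghtyContraction β T)
    (he : Tendsto (fun n => windowGap T (w n) t) atTop (𝓝 0))
    (he' : Tendsto (fun n => windowGap T (w n) (t + 1)) atTop (𝓝 0)) :
    Tendsto (fun n => dist (w n (t + (k - 1))) (w n (t + k))) atTop (𝓝 0) := by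
  have hZ := fun n => hT (w n) t
  simp only [windowGap_succ hk] at hZ he'
  simp only [windowGap] at hZ he he'
  refine hβ.tendsto_zero_of_le_add (fun n => dist_nonneg) (fun n => dist_nonneg)
    (fun n => dist_nonneg) he he' fun n => ?_
  linarith [hZ n, dist_triangle4 (w n (t + (k - 1))) (window T (w n) t)
    (window T (w n) (t + 1)) (w n (t + k)), dist_comm (w n (t + k)) (window T (w n) (t + 1))]

theorem tendsto_windowGap_iff_of_le (hk : 0 < k) (hβ : IsGeraghty β)
    (hT : IsGeraghtyContraction β T) {a b : ℕ} (hab : a ≤ b)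
    (hδ : ∀ t, a ≤ t → t < b →
      Tendsto (fun n => dist (w n (t + (k - 1))) (w n (t + k))) atTop (𝓝 0)) :
    Tendsto (fun n => windowGap T (w n) a) atTop (𝓝 0) ↔
      Tendsto (fun n => windowGap T (w n) b) atTop (𝓝 0) := by
  induction b, hab using Nat.le_induction with
  | base => rfl
  | succ b hab ih =>
    rw [ih fun t hat htb => hδ t hat (by omega)]
    exact tendsto_windowGap_succ_iff hk hβ hT (hδ b hab (by omega))

theorem tendsto_dist_orbit_succ (hk : 0 < k) (hβ : IsGeraghty β)
    (hT : IsGeraghtyContraction β T) (x : X) :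
    Tendsto (fun n => dist (orbit T x n) (orbit T x (n + 1))) atTop (𝓝 0) := by
  set y := orbit T x
  have hy : ∀ n, y (n + k) = window T y n := orbit_add T x
  have hstep : ∀ n, windowGap T y (n + 1) ≤ β (windowGap T y n) * windowGap T y n := fun n => by
    have h := hT y n
    rw [show dist (y (n + (k - 1))) (y (n + k)) = windowGap T y n by rw [hy]; rfl,
      show dist (window T y n) (window T y (n + 1)) = windowGap T y (n + 1) by
        rw [windowGap_succ hk, hy], ← max_assoc, max_self] at h
    exact hβ.le_apply_mul_of_le_max dist_nonneg dist_nonneg h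
  have hgap := hβ.tendsto_zero_of_succ_le (q := windowGap T y) (fun n => dist_nonneg) hstep
  refine (tendsto_add_atTop_iff_nat (k - 1)).1 (hgap.congr fun n => ?_)
  rw [windowGap, ← hy, show n + (k - 1) + 1 = n + k by omega]

theorem cauchySeq_orbit (hk : 0 < k) (hβ : IsGeraghty β) (hT : IsGeraghtyContraction β T)
    (x : X) : CauchySeq (orbit T x) := by
  set y := orbit T x
  have hy : ∀ n, y (n + k) = window T y n := orbit_add T x
  have hd_along : ∀ {f : ℕ → ℕ}, (∀ i, i ≤ f i) →
      Tendsto (fun i => dist (y (f i)) (y (f i + 1))) atTop (𝓝 0) := fun hf =>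
    (tendsto_dist_orbit_succ hk hβ hT x).comp (tendsto_atTop_mono hf tendsto_id)
  by_contra hy_cauchy
  obtain ⟨ε, hε, hsep⟩ : ∃ ε > 0, ∀ N, ∃ m ≥ N, ∃ n ≥ N, ε ≤ dist (y m) (y n) := by
    simpa [Metric.cauchySeq_iff] using hy_cauchy
  choose m hm n hn hmn using fun i => hsep (i + k)
  -- the window runs through `y (m i)` and then jumps to `y (n i)`
  let W i := splice (fun j => y (m i + 1 - k + j)) (fun j => y (n i + j)) k
  have hδ : ∀ t, 1 ≤ t →
      Tendsto (fun i => dist (W i (t + (k - 1))) (W i (t + k))) atTop (𝓝 0) := fun t ht =>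
    (hd_along (f := fun i => n i + (t - 1)) fun i => by have := hn i; omega).congr fun i => by
      simp only [W]
      rw [splice_of_le (by omega), splice_of_le (by omega)]
      congr 2 <;> omega
  have hgap_k : Tendsto (fun i => windowGap T (W i) k) atTop (𝓝 0) :=
    (hd_along (f := fun i => n i + (k - 1)) fun i => by have := hn i; omega).congr fun i => by
      simp only [windowGap, W]
      rw [window_splice_of_le _ _ _ le_rfl, splice_of_le (by omega), window_shift, ← hy]
      congr 2 <;> omega
  have hgap_0 : Tendsto (fun i => windowGap T (W i) 0) atTop (𝓝 0) :=
    (hd_along (f := m) fun i => by have := hm i; omega).congr fun i => by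
      have := hm i
      simp only [windowGap, W]
      rw [window_splice_zero, splice_of_lt (by omega), window_shift, ← hy]
      congr 2 <;> omega
  have hgap_1 := (tendsto_windowGap_iff_of_le hk hβ hT (by omega) fun t ht _ => hδ t ht).2 hgap_k
  have hδ_0 := tendsto_dist_of_tendsto_windowGap hk hβ hT hgap_0 hgap_1
  refine hε.not_ge (ge_of_tendsto hδ_0 (.of_forall fun i => (hmn i).trans_eq ?_))
  have := hm i
  simp only [W]
  rw [splice_of_lt (by omega), splice_of_le (by omega)]
  congr 2 <;> omega

theorem apply_const_eq_of_tendsto_orbit (hk : 0 < k) (hβ : IsGeraghty β)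
    (hT : IsGeraghtyContraction β T) {x u : X} (hu : Tendsto (orbit T x) atTop (𝓝 u)) :
    T (fun _ => u) = u := by
  set y := orbit T x
  have hy : ∀ n, y (n + k) = window T y n := orbit_add T x
  let V n := splice (fun j => y (n + j)) (fun _ => u) k
  have hV : ∀ j, Tendsto (fun n => V n j) atTop (𝓝 u) := fun j => by
    rcases lt_or_ge j k with hj | hj
    · exact (hu.comp (tendsto_add_atTop_nat j)).congr fun n => by simp [V, splice_of_lt hj]
    · simp [V, splice_of_le hj]
  have hδ : ∀ t, Tendsto (fun n => dist (V n (t + (k - 1))) (V n (t + k))) atTop (𝓝 0) :=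
    fun t => by simpa using (hV _).dist (hV _)
  have hgap_0 : Tendsto (fun n => windowGap T (V n) 0) atTop (𝓝 0) := by
    have hwin : Tendsto (fun n => window T (V n) 0) atTop (𝓝 u) :=
      (hu.comp (tendsto_add_atTop_nat k)).congr fun n => by
        rw [Function.comp_apply, hy, window_splice_zero, window_shift, add_zero]
    have h := (hV (0 + (k - 1))).dist hwin
    rw [dist_self] at h
    exact h
  have hgap_k := (tendsto_windowGap_iff_of_le hk hβ hT (Nat.zero_le k) fun t _ _ => hδ t).1 hgap_0
  have hgap_k_eq : ∀ n, windowGap T (V n) k = dist u (T fun _ => u) := fun n => by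
    simp only [windowGap, V, window_splice_of_le _ _ _ le_rfl, splice_of_le (Nat.le_add_right k _)]
    rfl
  simp only [hgap_k_eq, tendsto_const_nhds_iff, dist_eq_zero] at hgap_k
  exact hgap_k.symm

end

theorem k_dim_geraghty_fixed_point {X : Type*} [MetricSpace X] [CompleteSpace X] [Nonempty X]
    (k : ℕ) (hk : 0 < k) (β : ℝ → ℝ) (hβ : IsGeraghty β) (T : (Fin k → X) → X)
    (hT : ∀ w : ℕ → X,
      dist (T (fun i : Fin k => w i)) (T (fun i : Fin k => w (i + 1))) ≤
        β (max (dist (w (k - 1)) (w k))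
            (max (dist (w (k - 1)) (T (fun i : Fin k => w i)))
              (dist (w k) (T (fun i : Fin k => w (i + 1)))))) *
          max (dist (w (k - 1)) (w k))
            (max (dist (w (k - 1)) (T (fun i : Fin k => w i)))
              (dist (w k) (T (fun i : Fin k => w (i + 1)))))) :
    ∃ u : X, T (fun _ => u) = u := by
  have hT' : IsGeraghtyContraction β T := fun w t => by
    have hnext : (T fun i : Fin k => w (t + (i + 1))) = window T w (t + 1) :=
      congrArg T <| funext fun i => by rw [← add_assoc, add_right_comm]
    have h := hT fun j => w (t + j)
    rw [hnext] at h
    rwa [windowGap_succ hk]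
  obtain ⟨x⟩ := ‹Nonempty X›
  obtain ⟨u, hu⟩ := cauchySeq_tendsto_of_complete (cauchySeq_orbit hk hβ hT' x)
  exact ⟨u, apply_const_eq_of_tendsto_orbit hk hβ hT' hu⟩
end

section
/- Let (X,d) be a complete metric space, k ∈ ℕ, and T : X^k → X satisfy for all u₁,…,u_k, v₁,…,v_k ∈ X: d(T(u₁,…,u_k), T(v₁,…,v_k)) ≤ (β(d(u_k, v_k))/2)·( d(T(u₁,…,u_k), u_k) + d(T(v₁,…,v_k), v_k) ), where β is a Geraghty function. Then there exists u ∈ X with T(u,…,u) = u, and for any base points x₁,…,x_k ∈ X the k-Picard sequence defined by x_{n+k} := T(x_n,…,x_{n+k-1}) converges to u. -/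
/-!
Both the Picard iterates of `u ↦ T (u, …, u)` and the tail `n ↦ x (n + k - 1)` of a k-Picard
sequence are orbits `y (n + 1) = T (a n)` whose windows `a n` end in `y n`. Along such an orbit
the contraction gives `2 e (n + 1) ≤ β (e n) (e n + e (n + 1))` for the step lengths
`e n = d(y (n + 1), y n)`, so `e` decreases, and if its limit were positive then `β (e n) → 1`,
which the Geraghty property forbids. Hence `e → 0`, the bound
`d(y (n + 1), y (m + 1)) ≤ (e n + e m) / 2` makes the orbit Cauchy, and its limit `v` satisfies
`T c = v` whenever `c` ends in `v`. Two such fixed points coincide because the contraction bound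
between them vanishes.
-/

open Filter Topology

/-- The Kannan–Geraghty condition with the last coordinate `u_k` of the paper replaced by an
arbitrary map `p`. -/
def IsKannanGeraghty {A X : Type*} [MetricSpace X] (β : ℝ → ℝ) (p T : A → X) : Prop :=
  ∀ a b, dist (T a) (T b) ≤ β (dist (p a) (p b)) / 2 * (dist (T a) (p a) + dist (T b) (p b))

namespace IsGeraghty

variable {β : ℝ → ℝ}

lemma le_half (hβ : IsGeraghty β) {r s t : ℝ} (ht : 0 ≤ t) (hs : 0 ≤ s)
    (h : r ≤ β t / 2 * s) : r ≤ s / 2 := by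
  have := hβ.1 t ht
  nlinarith

lemma tendsto_zero_of_le (hβ : IsGeraghty β) {e : ℕ → ℝ} (he : ∀ n, 0 ≤ e n)
    (hrec : ∀ n, e (n + 1) ≤ β (e n) / 2 * (e n + e (n + 1))) :
    Tendsto e atTop (𝓝 0) := by
  have hanti : Antitone e := antitone_nat_of_succ_le fun n => by
    linarith [hβ.le_half (he n) (add_nonneg (he n) (he (n + 1))) (hrec n)]
  have hbdd : BddBelow (Set.range e) := ⟨0, by rintro _ ⟨n, rfl⟩; exact he n⟩
  set L := ⨅ n, e n
  have hL : Tendsto e atTop (𝓝 L) := tendsto_atTop_ciInf hanti hbdd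
  obtain hL0 | hLpos := (le_ciInf he : 0 ≤ L).eq_or_lt
  · rwa [hL0]
  have hsum_pos : ∀ n, 0 < e n + e (n + 1) := fun n => by
    linarith [ciInf_le hbdd n, ciInf_le hbdd (n + 1)]
  -- `2 e (n + 1) / (e n + e (n + 1)) ≤ β (e n) < 1`, and the ratio tends to `2 L / 2 L = 1`.
  have hratio : Tendsto (fun n => 2 * e (n + 1) / (e n + e (n + 1))) atTop (𝓝 1) := by
    have hL' := hL.comp (tendsto_add_atTop_nat 1)
    have := (hL'.const_mul 2).div (hL.add hL') (by positivity)
    rwa [← two_mul, div_self (by positivity)] at this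
  have hβ1 : Tendsto (fun n => β (e n)) atTop (𝓝 1) := by
    refine tendsto_of_tendsto_of_tendsto_of_le_of_le hratio tendsto_const_nhds (fun n => ?_)
      (fun n => (hβ.1 (e n) (he n)).2.le)
    rw [div_le_iff₀ (hsum_pos n)]
    linarith [hrec n]
  exact absurd (tendsto_nhds_unique hL (hβ.2 e he hβ1)) hLpos.ne'

end IsGeraghty

lemma cauchySeq_of_dist_le_half_add {X : Type*} [PseudoMetricSpace X] {y : ℕ → X} {e : ℕ → ℝ}
    (he : Tendsto e atTop (𝓝 0)) (hd : ∀ n m, dist (y n) (y m) ≤ (e n + e m) / 2) :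
    CauchySeq y := by
  refine Metric.cauchySeq_iff'.2 fun ε hε => ?_
  obtain ⟨N, hN⟩ := (he.eventually (gt_mem_nhds hε)).exists_forall_of_atTop
  exact ⟨N, fun n hn => by linarith [hd n N, hN n hn, hN N le_rfl]⟩

namespace IsKannanGeraghty

variable {A X : Type*} [MetricSpace X] {β : ℝ → ℝ} {p T : A → X}

lemma eq_of_apply_eq (hK : IsKannanGeraghty β p T) {c c' : A} (hc : T c = p c)
    (hc' : T c' = p c') : p c = p c' := by
  have h := hK c c'
  rwa [hc, hc', dist_self, dist_self, add_zero, mul_zero, dist_le_zero] at h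

variable {a : ℕ → A} {y : ℕ → X}

lemma dist_orbit_le (hK : IsKannanGeraghty β p T) (hy : ∀ n, y (n + 1) = T (a n))
    (hp : ∀ n, p (a n) = y n) (n m : ℕ) :
    dist (y (n + 1)) (y (m + 1)) ≤
      β (dist (y n) (y m)) / 2 * (dist (y (n + 1)) (y n) + dist (y (m + 1)) (y m)) := by
  simpa only [hy, hp] using hK (a n) (a m)

lemma tendsto_dist_succ (hK : IsKannanGeraghty β p T) (hβ : IsGeraghty β)
    (hy : ∀ n, y (n + 1) = T (a n)) (hp : ∀ n, p (a n) = y n) :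
    Tendsto (fun n => dist (y (n + 1)) (y n)) atTop (𝓝 0) :=
  hβ.tendsto_zero_of_le (fun _ => dist_nonneg) fun n => by
    rw [add_comm (dist (y (n + 1)) (y n))]
    exact hK.dist_orbit_le hy hp (n + 1) n

lemma cauchySeq (hK : IsKannanGeraghty β p T) (hβ : IsGeraghty β)
    (hy : ∀ n, y (n + 1) = T (a n)) (hp : ∀ n, p (a n) = y n) : CauchySeq y := by
  refine (cauchySeq_shift 1).1 (cauchySeq_of_dist_le_half_add (hK.tendsto_dist_succ hβ hy hp)
    fun n m => ?_)
  exact hβ.le_half dist_nonneg (add_nonneg dist_nonneg dist_nonneg) (hK.dist_orbit_le hy hp n m)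

lemma apply_eq_of_tendsto (hK : IsKannanGeraghty β p T) (hβ : IsGeraghty β)
    (hy : ∀ n, y (n + 1) = T (a n)) (hp : ∀ n, p (a n) = y n) {v : X}
    (hv : Tendsto y atTop (𝓝 v)) {c : A} (hc : p c = v) : T c = v := by
  have hbound : ∀ n, dist (T c) v ≤ dist (y (n + 1)) (y n) + 2 * dist (y (n + 1)) v := by
    intro n
    have h := hK c (a n)
    rw [hc, ← hy, hp] at h
    linarith [hβ.le_half dist_nonneg (add_nonneg dist_nonneg dist_nonneg) h,
      dist_triangle (T c) (y (n + 1)) v]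
  have hlim : Tendsto (fun n => dist (y (n + 1)) (y n) + 2 * dist (y (n + 1)) v) atTop (𝓝 0) := by
    simpa using (hK.tendsto_dist_succ hβ hy hp).add
      (((tendsto_iff_dist_tendsto_zero.1 hv).comp (tendsto_add_atTop_nat 1)).const_mul 2)
  exact dist_le_zero.1 (ge_of_tendsto' hlim hbound)

lemma exists_tendsto [CompleteSpace X] (hK : IsKannanGeraghty β p T) (hβ : IsGeraghty β)
    (hy : ∀ n, y (n + 1) = T (a n)) (hp : ∀ n, p (a n) = y n) :
    ∃ v, Tendsto y atTop (𝓝 v) ∧ ∀ c, p c = v → T c = v := by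
  obtain ⟨v, hv⟩ := cauchySeq_tendsto_of_complete (hK.cauchySeq hβ hy hp)
  exact ⟨v, hv, fun _ => hK.apply_eq_of_tendsto hβ hy hp hv⟩

end IsKannanGeraghty

theorem k_dim_kannan_geraghty {X : Type*} [MetricSpace X] [CompleteSpace X] [Nonempty X]
    (k : ℕ) (hk : 0 < k) (β : ℝ → ℝ) (hβ : IsGeraghty β) (T : (Fin k → X) → X)
    (hT : ∀ a b : Fin k → X,
      dist (T a) (T b) ≤
        β (dist (a ⟨k - 1, by omega⟩) (b ⟨k - 1, by omega⟩)) / 2 *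
          (dist (T a) (a ⟨k - 1, by omega⟩) + dist (T b) (b ⟨k - 1, by omega⟩))) :
    ∃ u : X, T (fun _ => u) = u ∧
      ∀ x : ℕ → X, (∀ n, x (n + k) = T (fun i : Fin k => x (n + i))) →
        Tendsto x atTop (𝓝 u) := by
  have hK : IsKannanGeraghty β (fun a : Fin k → X => a ⟨k - 1, by omega⟩) T := hT
  obtain ⟨x₀⟩ := ‹Nonempty X›
  set S : X → X := fun u => T fun _ => u
  have hS : ∀ n, S^[n + 1] x₀ = T fun _ => S^[n] x₀ := fun n => Function.iterate_succ_apply' ..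
  obtain ⟨u, -, hu⟩ := hK.exists_tendsto (a := fun n _ => S^[n] x₀) hβ hS fun _ => rfl
  refine ⟨u, hu _ rfl, fun x hx => ?_⟩
  have hxT : ∀ n, x (n + 1 + (k - 1)) = T fun i : Fin k => x (n + i) := fun n => by
    rw [← hx, show n + 1 + (k - 1) = n + k by omega]
  obtain ⟨v, hxv, hv⟩ :=
    hK.exists_tendsto (y := fun n => x (n + (k - 1))) hβ hxT fun _ => by rfl
  obtain rfl : v = u :=
    hK.eq_of_apply_eq (c := fun _ => v) (c' := fun _ => u) (hv _ rfl) (hu _ rfl)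
  exact (tendsto_add_atTop_iff_nat (k - 1)).1 hxv
end

section
/- Let (X,d) be a metric space, β a Geraghty function, and suppose a sequence (aₙ) of nonnegative reals satisfies a_{n+1} ≤ β(aₙ)·aₙ for all n. Then aₙ → 0. -/
open Filter Topology

section ContractiveSequence

variable {a b : ℕ → ℝ}

theorem antitone_of_le_mul_of_le_one (ha : ∀ n, 0 ≤ a n) (h : ∀ n, a (n + 1) ≤ b n * a n)
    (hb : ∀ n, b n ≤ 1) : Antitone a :=
  antitone_nat_of_succ_le fun n =>
    (h n).trans (mul_le_of_le_one_left (ha n) (hb n))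

/-- Squeeze: eventually `a (n + 1) / a n ≤ b n ≤ 1`, and the ratios tend to `L / L = 1`. -/
theorem tendsto_one_of_le_mul_of_tendsto_pos {L : ℝ} (h : ∀ n, a (n + 1) ≤ b n * a n)
    (hb : ∀ n, b n ≤ 1) (hL : Tendsto a atTop (𝓝 L)) (hL0 : 0 < L) :
    Tendsto b atTop (𝓝 1) := by
  have hratio : Tendsto (fun n => a (n + 1) / a n) atTop (𝓝 (L / L)) :=
    ((tendsto_add_atTop_iff_nat 1).mpr hL).div hL hL0.ne'
  rw [div_self hL0.ne'] at hratio
  have hpos : ∀ᶠ n in atTop, 0 < a n := hL.eventually (eventually_gt_nhds hL0)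
  refine tendsto_of_tendsto_of_tendsto_of_le_of_le' hratio tendsto_const_nhds ?_
    (Eventually.of_forall hb)
  filter_upwards [hpos] with n hn
  exact (div_le_iff₀ hn).mpr (h n)

end ContractiveSequence

theorem geraghty_sequence_lemma (β : ℝ → ℝ) (hβ : IsGeraghty β) (a : ℕ → ℝ)
    (ha : ∀ n, 0 ≤ a n) (h : ∀ n, a (n + 1) ≤ β (a n) * a n) :
    Tendsto a atTop (𝓝 0) := by
  obtain ⟨hβ_range, hβ_limit⟩ := hβ
  have hβ_le_one : ∀ n, β (a n) ≤ 1 := fun n => (hβ_range _ (ha n)).2.le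
  have hL : Tendsto a atTop (𝓝 (⨅ n, a n)) :=
    tendsto_atTop_ciInf (antitone_of_le_mul_of_le_one ha h hβ_le_one) ⟨0, by
      rintro _ ⟨n, rfl⟩
      exact ha n⟩
  rcases (ge_of_tendsto' hL ha).eq_or_lt with hL0 | hL0
  · rwa [← hL0] at hL
  -- A positive limit forces `β (a n) → 1`, so the Geraghty property itself yields `a → 0`.
  · exact hβ_limit a ha (tendsto_one_of_le_mul_of_tendsto_pos h hβ_le_one hL hL0)
end

section
/- Let (X,d) be a metric space and suppose a sequence (aₙ) of nonnegative reals satisfies a_{n+1} ≤ (β(aₙ)/2)·(aₙ + a_{n+1}) for all n, where β is a Geraghty function. Then aₙ → 0. -/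
open Filter Topology

theorem kannan_geraghty_sequence_lemma (β : ℝ → ℝ) (hβ : IsGeraghty β) (a : ℕ → ℝ)
    (ha : ∀ n, 0 ≤ a n) (h : ∀ n, a (n + 1) ≤ β (a n) / 2 * (a n + a (n + 1))) :
    Tendsto a atTop (𝓝 0) := by
  have hβa : ∀ n, 0 ≤ β (a n) ∧ β (a n) < 1 := fun n => hβ.1 _ (ha n)
  have hmono : ∀ n, a (n + 1) ≤ a n := by
    intro n
    have h1 := h n
    have h2 := (hβa n).1
    have h3 := (hβa n).2
    nlinarith [ha n, ha (n + 1)]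
  have hanti : Antitone a := antitone_nat_of_succ_le hmono
  have hbdd : BddBelow (Set.range a) := ⟨0, by rintro x ⟨n, rfl⟩; exact ha n⟩
  set r := ⨅ n, a n with hr
  have htend : Tendsto a atTop (𝓝 r) := tendsto_atTop_ciInf hanti hbdd
  have hrle : ∀ n, r ≤ a n := fun n => ciInf_le hbdd n
  have hr0 : 0 ≤ r := le_ciInf fun n => ha n
  rcases eq_or_lt_of_le hr0 with heq | hpos
  · rwa [← heq] at htend
  · exfalso
    -- show β (a n) → 1
    have hden : ∀ n, 0 < a n + a (n + 1) := fun n =>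
      lt_of_lt_of_le (by linarith [hrle n, hrle (n+1)] : (0:ℝ) < r + r)
        (by linarith [hrle n, hrle (n+1)])
    have hlb : ∀ n, 2 * a (n + 1) / (a n + a (n + 1)) ≤ β (a n) := by
      intro n
      rw [div_le_iff₀ (hden n)]
      nlinarith [h n]
    have hlim : Tendsto (fun n => 2 * a (n + 1) / (a n + a (n + 1))) atTop (𝓝 1) := by
      have h1 : Tendsto (fun n => a (n + 1)) atTop (𝓝 r) :=
        htend.comp (tendsto_add_atTop_nat 1)
      have h2 : Tendsto (fun n => 2 * a (n + 1) / (a n + a (n + 1))) atTop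
          (𝓝 (2 * r / (r + r))) := ((h1.const_mul 2).div (htend.add h1) (by positivity))
      have : 2 * r / (r + r) = 1 := by field_simp; ring
      rwa [this] at h2
    have hβlim : Tendsto (fun n => β (a n)) atTop (𝓝 1) :=
      tendsto_of_tendsto_of_tendsto_of_le_of_le hlim tendsto_const_nhds
        hlb (fun n => (hβa n).2.le)
    have := hβ.2 a ha hβlim
    have : r = 0 := tendsto_nhds_unique htend this
    linarith
end

section
/- Let (X,d) be a complete metric space and T : X → X satisfy d(Tx, Ty) ≤ (β(d(x,y))/2)·(d(Tx, y) + d(Ty, x)) for all x,y ∈ X, where β is a Geraghty function. Then T has a fixed point u ∈ X, and the Picard iterates Tⁿx₀ converge to u for any x₀ ∈ X. -/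
open Filter Topology

theorem fisher_geraghty_fixed_point {X : Type*} [MetricSpace X] [CompleteSpace X] [Nonempty X]
    (β : ℝ → ℝ) (hβ : IsGeraghty β) (T : X → X)
    (hT : ∀ x y : X, dist (T x) (T y) ≤ β (dist x y) / 2 * (dist (T x) y + dist (T y) x)) :
    ∃ u : X, T u = u ∧ ∀ x₀ : X, Tendsto (fun n => T^[n] x₀) atTop (𝓝 u) := by
  obtain ⟨hβ1, hβ2⟩ := hβ
  -- Main construction: for every starting point, iterates converge to a fixed point
  have main : ∀ x₀ : X, ∃ u : X, T u = u ∧ Tendsto (fun n => T^[n] x₀) atTop (𝓝 u) := by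
    intro x₀
    set x : ℕ → X := fun n => T^[n] x₀ with hxdef
    have hxs : ∀ n, x (n + 1) = T (x n) := fun n => Function.iterate_succ_apply' T n x₀
    set d : ℕ → ℝ := fun n => dist (x n) (x (n + 1)) with hddef
    have hd0 : ∀ n, 0 ≤ d n := fun n => dist_nonneg
    -- key step inequality on consecutive distances
    have step : ∀ n, 2 * d (n + 1) ≤ β (d n) * (d n + d (n + 1)) := by
      intro n
      have h := hT (x n) (x (n + 1))
      rw [← hxs n, ← hxs (n + 1)] at h
      have htri : dist (x (n + 2)) (x n) ≤ d (n + 1) + d n := by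
        calc dist (x (n + 2)) (x n) ≤ dist (x (n + 2)) (x (n + 1)) + dist (x (n + 1)) (x n) :=
              dist_triangle _ _ _
          _ = d (n + 1) + d n := by rw [dist_comm (x (n+2)) (x (n+1)), dist_comm (x (n+1)) (x n)]
      have hb := hβ1 (d n) (hd0 n)
      have hdd : dist (x (n + 1)) (x (n + 1)) = 0 := dist_self _
      have h' : d (n + 1) ≤ β (d n) / 2 * (dist (x (n+1)) (x (n+1)) + dist (x (n+2)) (x n)) := h
      rw [hdd] at h'
      nlinarith [hd0 n, hd0 (n+1), hb.1, hb.2]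
    have hanti : ∀ n, d (n + 1) ≤ d n := by
      intro n
      have hb := hβ1 (d n) (hd0 n)
      nlinarith [step n, hd0 n, hd0 (n+1), hb.1, hb.2]
    have hantitone : Antitone d := antitone_nat_of_succ_le hanti
    have hmono_le : ∀ {m n : ℕ}, m ≤ n → d n ≤ d m := fun h => hantitone h
    -- consecutive distances tend to 0
    have hbdd : BddBelow (Set.range d) := ⟨0, by rintro y ⟨n, rfl⟩; exact hd0 n⟩
    have hdr : Tendsto d atTop (𝓝 (⨅ n, d n)) := tendsto_atTop_ciInf hantitone hbdd
    set r := ⨅ n, d n with hr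
    have hr0 : 0 ≤ r := le_ciInf hd0
    have hrle : ∀ n, r ≤ d n := fun n => ciInf_le hbdd n
    have hd_to : Tendsto d atTop (𝓝 0) := by
      rcases eq_or_lt_of_le hr0 with h0 | hpos
      · rwa [← h0] at hdr
      · exfalso
        have hlow : ∀ n, 2 * d (n + 1) / (d n + d (n + 1)) ≤ β (d n) := by
          intro n
          have hpos' : 0 < d n + d (n + 1) := by
            have := hrle n; have := hrle (n + 1); linarith
          exact (div_le_iff₀ hpos').2 (step n)
        have hlow_to : Tendsto (fun n => 2 * d (n + 1) / (d n + d (n + 1))) atTop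
            (𝓝 (2 * r / (r + r))) := by
          have h1 : Tendsto (fun n => 2 * d (n + 1)) atTop (𝓝 (2 * r)) :=
            (tendsto_const_nhds.mul (hdr.comp (tendsto_add_atTop_nat 1)))
          have h2 : Tendsto (fun n => d n + d (n + 1)) atTop (𝓝 (r + r)) :=
            hdr.add (hdr.comp (tendsto_add_atTop_nat 1))
          exact h1.div h2 (by linarith)
        have hrr : 2 * r / (r + r) = 1 := by
          rw [show r + r = 2 * r by ring]
          field_simp
        rw [hrr] at hlow_to
        have hβto : Tendsto (fun n => β (d n)) atTop (𝓝 1) :=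
          tendsto_of_tendsto_of_tendsto_of_le_of_le hlow_to tendsto_const_nhds
            (fun n => hlow n) (fun n => (hβ1 (d n) (hd0 n)).2.le)
        have := hβ2 d hd0 hβto
        have : r = 0 := tendsto_nhds_unique hdr this
        linarith
    -- Cauchy
    have hcauchy : CauchySeq x := by
      rw [Metric.cauchySeq_iff]
      by_contra hcon
      push_neg at hcon
      obtain ⟨ε, hε, hcon⟩ := hcon
      choose m hm n hn hge using fun k => hcon (k + 1)
      set a : ℕ → ℕ := fun k => m k - 1 with hadef
      set b : ℕ → ℕ := fun k => n k - 1 with hbdef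
      have ha1 : ∀ k, a k + 1 = m k := fun k => by
        show m k - 1 + 1 = m k; have := hm k; omega
      have hb1 : ∀ k, b k + 1 = n k := fun k => by
        show n k - 1 + 1 = n k; have := hn k; omega
      have hak : ∀ k, k ≤ a k := fun k => by show k ≤ m k - 1; have := hm k; omega
      have hbk : ∀ k, k ≤ b k := fun k => by show k ≤ n k - 1; have := hn k; omega
      set t : ℕ → ℝ := fun k => dist (x (a k)) (x (b k)) with htdef
      set s : ℕ → ℝ := fun k => d (a k) + d (b k) with hsdef
      have hs0 : ∀ k, 0 ≤ s k := fun k => add_nonneg (hd0 _) (hd0 _)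
      have hs_to : Tendsto s atTop (𝓝 0) := by
        have : Tendsto (fun k => d k + d k) atTop (𝓝 (0 + 0)) := hd_to.add hd_to
        rw [add_zero] at this
        refine tendsto_of_tendsto_of_tendsto_of_le_of_le tendsto_const_nhds this hs0 ?_
        intro k
        exact add_le_add (hmono_le (hak k)) (hmono_le (hbk k))
      have hDge : ∀ k, ε ≤ dist (x (a k + 1)) (x (b k + 1)) := by
        intro k; rw [ha1, hb1]; exact hge k
      -- key inequality
      have hkey : ∀ k, 2 * ε ≤ β (t k) * (2 * ε + s k) := by
        intro k
        set D := dist (x (a k + 1)) (x (b k + 1)) with hDdef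
        have h := hT (x (a k)) (x (b k))
        rw [← hxs (a k), ← hxs (b k)] at h
        have htr1 : dist (x (a k + 1)) (x (b k)) ≤ D + d (b k) := by
          calc dist (x (a k + 1)) (x (b k))
              ≤ dist (x (a k + 1)) (x (b k + 1)) + dist (x (b k + 1)) (x (b k)) :=
                dist_triangle _ _ _
            _ = D + d (b k) := by rw [dist_comm (x (b k + 1)) (x (b k))]
        have htr2 : dist (x (b k + 1)) (x (a k)) ≤ D + d (a k) := by
          calc dist (x (b k + 1)) (x (a k))
              ≤ dist (x (b k + 1)) (x (a k + 1)) + dist (x (a k + 1)) (x (a k)) :=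
                dist_triangle _ _ _
            _ = D + d (a k) := by
                rw [dist_comm (x (b k + 1)) (x (a k + 1)), dist_comm (x (a k + 1)) (x (a k))]
        have hb' := hβ1 (t k) dist_nonneg
        have hD : ε ≤ D := hDge k
        have h' : D ≤ β (t k) / 2 * (dist (x (a k + 1)) (x (b k)) + dist (x (b k + 1)) (x (a k))) := h
        have hs' : s k = d (a k) + d (b k) := rfl
        have h2D : 2 * D ≤ β (t k) * (2 * D + s k) := by
          rw [hs']
          nlinarith [hb'.1, mul_nonneg hb'.1
            (by linarith : (0:ℝ) ≤ 2 * D + (d (a k) + d (b k)) -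
              (dist (x (a k + 1)) (x (b k)) + dist (x (b k + 1)) (x (a k))))]
        nlinarith [hb'.1, hb'.2, hs0 k, mul_nonneg (sub_nonneg.2 hb'.2.le) (sub_nonneg.2 hD)]
      have hβlow : ∀ k, 2 * ε / (2 * ε + s k) ≤ β (t k) := by
        intro k
        have : (0 : ℝ) < 2 * ε + s k := by have := hs0 k; linarith
        exact (div_le_iff₀ this).2 (hkey k)
      have hlow_to : Tendsto (fun k => 2 * ε / (2 * ε + s k)) atTop (𝓝 1) := by
        have h2 : Tendsto (fun k => 2 * ε + s k) atTop (𝓝 (2 * ε + 0)) :=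
          tendsto_const_nhds.add hs_to
        have := (tendsto_const_nhds (x := 2 * ε) (f := atTop)).div h2 (by linarith)
        rw [add_zero] at this
        have heq : 2 * ε / (2 * ε) = 1 := by field_simp
        rwa [heq] at this
      have hβto : Tendsto (fun k => β (t k)) atTop (𝓝 1) :=
        tendsto_of_tendsto_of_tendsto_of_le_of_le hlow_to tendsto_const_nhds
          (fun k => hβlow k) (fun k => (hβ1 (t k) dist_nonneg).2.le)
      have ht_to : Tendsto t atTop (𝓝 0) := hβ2 t (fun k => dist_nonneg) hβto
      -- but t k ≥ ε - s k → ε > 0 : contradiction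
      have htlb : ∀ k, ε - s k ≤ t k := by
        intro k
        have htr : dist (x (a k + 1)) (x (b k + 1)) ≤ d (a k) + t k + d (b k) := by
          calc dist (x (a k + 1)) (x (b k + 1))
              ≤ dist (x (a k + 1)) (x (a k)) + dist (x (a k)) (x (b k + 1)) := dist_triangle _ _ _
            _ ≤ dist (x (a k + 1)) (x (a k)) + (dist (x (a k)) (x (b k)) + dist (x (b k)) (x (b k + 1))) := by
                have := dist_triangle (x (a k)) (x (b k)) (x (b k + 1)); linarith
            _ = d (a k) + t k + d (b k) := by rw [dist_comm (x (a k + 1)) (x (a k))]; ring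
        have := hDge k
        simp only [hsdef]; linarith
      have hεle : ε ≤ 0 := by
        have hεto : Tendsto (fun k => ε - s k) atTop (𝓝 (ε - 0)) := tendsto_const_nhds.sub hs_to
        rw [sub_zero] at hεto
        exact le_of_tendsto_of_tendsto' hεto ht_to htlb
      linarith
    obtain ⟨u, hu⟩ := cauchySeq_tendsto_of_complete hcauchy
    refine ⟨u, ?_, hu⟩
    -- u is a fixed point
    have h1 : ∀ nn : ℕ, dist (x (nn + 1)) (T u) ≤ 1 / 2 * (dist (x (nn + 1)) u + dist (T u) (x nn)) := by
      intro nn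
      have h := hT (x nn) u
      rw [← hxs nn] at h
      have hb := hβ1 (dist (x nn) u) dist_nonneg
      nlinarith [@dist_nonneg _ _ (x (nn + 1)) u, @dist_nonneg _ _ (T u) (x nn), hb.1, hb.2]
    have hL : Tendsto (fun nn => dist (x (nn + 1)) (T u)) atTop (𝓝 (dist u (T u))) :=
      (hu.comp (tendsto_add_atTop_nat 1)).dist tendsto_const_nhds
    have hR : Tendsto (fun nn => 1 / 2 * (dist (x (nn + 1)) u + dist (T u) (x nn))) atTop
        (𝓝 (1 / 2 * (dist u u + dist (T u) u))) :=
      tendsto_const_nhds.mul (((hu.comp (tendsto_add_atTop_nat 1)).dist tendsto_const_nhds).add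
        (tendsto_const_nhds.dist hu))
    have hle := le_of_tendsto_of_tendsto' hL hR h1
    rw [dist_self, dist_comm (T u) u] at hle
    have : dist u (T u) = 0 := by linarith [@dist_nonneg _ _ u (T u)]
    exact (dist_eq_zero.1 this).symm
  -- uniqueness and conclusion
  obtain ⟨u, hu, hconv⟩ := main (Classical.arbitrary X)
  refine ⟨u, hu, fun x₀ => ?_⟩
  obtain ⟨v, hv, hconvv⟩ := main x₀
  have huv : v = u := by
    by_contra hne
    have hdpos : 0 < dist u v := dist_pos.2 (Ne.symm hne)
    have h := hT u v
    rw [hu, hv, dist_comm v u] at h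
    have hb := hβ1 (dist u v) dist_nonneg
    nlinarith [hb.1, hb.2]
  exact huv ▸ hconvv
end

section
/- Let (X,d) be a complete metric space and suppose a sequence (xₙ) in X satisfies: for all n < m, d(x_{n+1}, x_{m+1}) ≤ (1/2)·( d(xₙ, x_{n+1}) + d(x_m, x_{m+1}) ), and d(xₙ, x_{n+1}) → 0. Then (xₙ) is a Cauchy sequence and hence converges in X. -/
open Filter Topology

theorem cauchy_lemma {X : Type*} [MetricSpace X] [CompleteSpace X] (x : ℕ → X)
    (h : ∀ n m : ℕ, n < m →
      dist (x (n + 1)) (x (m + 1)) ≤ (1 / 2) * (dist (x n) (x (n + 1)) + dist (x m) (x (m + 1))))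
    (h0 : Tendsto (fun n => dist (x n) (x (n + 1))) atTop (𝓝 0)) :
    CauchySeq x ∧ ∃ u : X, Tendsto x atTop (𝓝 u) := by
  have hc : CauchySeq x := by
    rw [Metric.cauchySeq_iff]
    intro ε hε
    have := Metric.tendsto_atTop.mp h0 (ε / 2) (by linarith)
    obtain ⟨N, hN⟩ := this
    refine ⟨N + 1, fun m hm n hn => ?_⟩
    have hNd : ∀ k, N ≤ k → dist (x k) (x (k + 1)) < ε / 2 := fun k hk => by
      have := hN k hk; rwa [Real.dist_eq, sub_zero, abs_of_nonneg dist_nonneg] at this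
    obtain ⟨a, rfl⟩ : ∃ a, m = a + 1 := ⟨m - 1, by omega⟩
    obtain ⟨b, rfl⟩ : ∃ b, n = b + 1 := ⟨n - 1, by omega⟩
    have ha : N ≤ a := by omega
    have hb : N ≤ b := by omega
    rcases lt_trichotomy a b with hab | hab | hab
    · calc dist (x (a + 1)) (x (b + 1))
          ≤ (1 / 2) * (dist (x a) (x (a + 1)) + dist (x b) (x (b + 1))) := h a b hab
        _ < ε := by have := hNd a ha; have := hNd b hb; linarith
    · simp [hab, hε]
    · rw [dist_comm]
      calc dist (x (b + 1)) (x (a + 1))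
          ≤ (1 / 2) * (dist (x b) (x (b + 1)) + dist (x a) (x (a + 1))) := h b a hab
        _ < ε := by have := hNd a ha; have := hNd b hb; linarith
  exact ⟨hc, cauchySeq_tendsto_of_complete hc⟩
end
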